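/- For any pseudo-element (x, α), the pseudo-element (x, ⌈↓{x} ∩ ↓α⌉) is in canonical form and has the same pseudo-closure as (x, α). -/

import Mathlib

def dc {S : Type*} [Preorder S] (L : Set S) : Set S := {s | ∃ a ∈ L, s ≤ a}

def maxElems {S : Type*} [Preorder S] (L : Set S) : Set S :=
  {a ∈ L | ∀ b ∈ L, a ≤ b → b ≤ a}

def pc {S : Type*} [Preorder S] (x : S) (α : Set S) : Set S := dc {x} \ dc α

/-! In a finite poset every element of a set lies below a maximal element of it, so passing to
maximal elements does not change the down-closure; and `↓{x} ∩ ↓α` is already down-closed, so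
removing it from `↓{x}` removes exactly `↓α`. -/

section Preorder

variable {S : Type*} [Preorder S]

theorem mem_dc_singleton {x s : S} : s ∈ dc {x} ↔ s ≤ x := by
  simp [dc]

theorem maxElems_subset (L : Set S) : maxElems L ⊆ L := fun _ ha => ha.1

theorem dc_mono {L M : Set S} (h : L ⊆ M) : dc L ⊆ dc M :=
  fun _ ⟨a, ha, hsa⟩ => ⟨a, h ha, hsa⟩

theorem isLowerSet_dc (L : Set S) : IsLowerSet (dc L) :=
  fun _ _ hba ⟨c, hc, hac⟩ => ⟨c, hc, hba.trans hac⟩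

theorem IsLowerSet.dc_eq {L : Set S} (hL : IsLowerSet L) : dc L = L :=
  Set.Subset.antisymm (fun _ ⟨_, ha, hsa⟩ => hL hsa ha) fun a ha => ⟨a, ha, le_rfl⟩

theorem Set.Finite.dc_maxElems {L : Set S} (hL : L.Finite) : dc (maxElems L) = dc L := by
  refine (dc_mono (maxElems_subset L)).antisymm ?_
  rintro s ⟨a, ha, hsa⟩
  obtain ⟨m, ham, hm⟩ := hL.exists_le_maximal ha
  exact ⟨m, hm, hsa.trans ham⟩

theorem pc_maxElems_dc_inter {x : S} (hx : (dc {x}).Finite) (α : Set S) :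
    pc x (maxElems (dc {x} ∩ dc α)) = pc x α := by
  have hfin : (dc {x} ∩ dc α).Finite := hx.inter_of_left _
  rw [pc, hfin.dc_maxElems, ((isLowerSet_dc _).inter (isLowerSet_dc _)).dc_eq,
    Set.sdiff_self_inter, pc]

end Preorder

theorem stmt_8_general {S : Type*} [SemilatticeInf S] [Fintype S] (x : S) (α : Set S) :
    (∀ a ∈ maxElems (dc {x} ∩ dc α), a ≤ x) ∧
    pc x (maxElems (dc {x} ∩ dc α)) = pc x α :=
  ⟨fun _ ha => mem_dc_singleton.mp (maxElems_subset _ ha).1,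
    pc_maxElems_dc_inter (Set.toFinite _) α⟩

theorem stmt_8 {S : Type*} [SemilatticeInf S] [Fintype S] (x : S) (α : Set S)
    (hα : IsAntichain (· ≤ ·) α) (hx : x ∉ dc α) :
    (∀ a ∈ maxElems (dc {x} ∩ dc α), a ≤ x) ∧
    pc x (maxElems (dc {x} ∩ dc α)) = pc x α :=
  stmt_8_general x α
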